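/- Let f be a continuous map of M = [0,1] into itself. Then any two minimal cycles of intervals for f either coincide or have disjoint interiors. -/

import Mathlib

open Set MeasureTheory Filter Topology

noncomputable section

/-- The unit interval `M = [0,1]`. -/
abbrev unitI : Set ℝ := Set.Icc 0 1

/-- Data of an interval map: the map `f`, the finite critical set `C`,
the one-sided critical orders `l s c` (`s = true` for the right side `c+`,
`s = false` for the left side `c-`), and the one-sided limit values
`fv s c = f(c±)`. -/
structure CritData where
  f : ℝ → ℝ
  C : Finset ℝ
  l : Bool → ℝ → ℝ
  fv : Bool → ℝ → ℝ

namespace CritData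

variable (D : CritData)

/-- One-sided neighbourhood of `c` of radius `ε`. -/
def sideIoo (s : Bool) (c ε : ℝ) : Set ℝ := if s then Ioo c (c + ε) else Ioo (c - ε) c

/-- The one-sided punctured half line at `c`. -/
def sideSet (s : Bool) (c : ℝ) : Set ℝ := if s then Ioi c else Iio c

/-- `f` is piecewise `C²` with critical set `C`: `C ⊆ M`, `f` maps `M` to `M`,
`f` is `C²` with non-vanishing derivative and injective (a diffeomorphism) on each
connected component of `M \ C`, has one-sided limits `fv s c` at each `c ∈ C`, and
near each `c ∈ C` the map has one-sided critical order `l s c ∈ [1,∞)`. -/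
def IsPiecewiseC2 : Prop :=
  (D.C : Set ℝ) ⊆ unitI ∧ MapsTo D.f unitI unitI ∧
  ContDiffOn ℝ 2 D.f (unitI \ (D.C : Set ℝ)) ∧
  (∀ x ∈ unitI \ (D.C : Set ℝ), deriv D.f x ≠ 0) ∧
  (∀ x ∈ unitI \ (D.C : Set ℝ),
    InjOn D.f (connectedComponentIn (unitI \ (D.C : Set ℝ)) x)) ∧
  ∀ c ∈ D.C, ∀ s : Bool,
    1 ≤ D.l s c ∧
    Tendsto D.f (𝓝[sideSet s c] c) (𝓝 (D.fv s c)) ∧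
    ∃ K₁ K₂ ε : ℝ, 0 < K₁ ∧ K₁ ≤ K₂ ∧ 0 < ε ∧
      ∀ x ∈ sideIoo s c ε,
        (K₁ * |x - c| ^ (D.l s c - 1) ≤ |deriv D.f x| ∧
          |deriv D.f x| ≤ K₂ * |x - c| ^ (D.l s c - 1)) ∧
        (K₁ * |x - c| ^ (D.l s c) ≤ |D.f x - D.fv s c| ∧
          |D.f x - D.fv s c| ≤ K₂ * |x - c| ^ (D.l s c)) ∧
        (K₁ * |x - c| ^ (D.l s c - 2) ≤ |deriv (deriv D.f) x| ∧
          |deriv (deriv D.f) x| ≤ K₂ * |x - c| ^ (D.l s c - 2))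

/-- Negative Schwarzian derivative: `|Df|^{-1/2}` is convex on each connected
component of `M \ C`. -/
def NegSchwarzian : Prop :=
  ∀ x ∈ unitI \ (D.C : Set ℝ),
    ConvexOn ℝ (connectedComponentIn (unitI \ (D.C : Set ℝ)) x)
      (fun y => |deriv D.f y| ^ (-(1 : ℝ) / 2))

/-- `f^n(c)` along the side-`s` orbit of the critical point `c` (for `n ≥ 1`):
`f^n(c) = f^[n-1](f(c±))`. -/
def fnC (s : Bool) (c : ℝ) (n : ℕ) : ℝ := D.f^[n - 1] (D.fv s c)

/-- `Df^n(f(c))`, the derivative of `f^n` at the (one-sided) critical value `f(c±)`. -/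
def DfnFc (s : Bool) (c : ℝ) (n : ℕ) : ℝ := deriv (D.f^[n]) (D.fv s c)

/-- A critical point of `C` closest to `y`. -/
def nearest (y : ℝ) : ℝ :=
  if h : D.C.Nonempty then (D.C.exists_min_image (fun c => |y - c|) h).choose else 0

/-- The critical order `l(c̃)` of the critical point `c̃` nearest to `y`, taken on the
side of `c̃` on which `y` lies. -/
def lNear (y : ℝ) : ℝ := D.l (decide (D.nearest y ≤ y)) (D.nearest y)

/-- The quantity `( |f^n(c)−c̃|^{l(c̃)} / (|f^n(c)−c̃|^{l(c)} |Df^n(f(c))|) )^e`,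
where `c̃` is the critical point closest to `f^n(c)`. -/
def sumTerm (s : Bool) (c : ℝ) (e : ℝ) (n : ℕ) : ℝ :=
  (|D.fnC s c n - D.nearest (D.fnC s c n)| ^ D.lNear (D.fnC s c n) /
    (|D.fnC s c n - D.nearest (D.fnC s c n)| ^ D.l s c * |D.DfnFc s c n|)) ^ e

/-- Summability condition (I). -/
def CondI : Prop :=
  ∀ c ∈ D.C, ∀ s : Bool,
    Summable fun n : ℕ => D.sumTerm s c (1 / (2 * D.l s c - 1)) (n + 1)

/-- Summability condition (II): `∑ₙ |Df^n(f(c))|^{-1/l(c)} < ∞`. -/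
def CondII : Prop :=
  ∀ c ∈ D.C, ∀ s : Bool,
    Summable fun n : ℕ => (1 / |D.DfnFc s c (n + 1)|) ^ (1 / D.l s c)

/-- `γ_n(c)`. -/
def gamma (s : Bool) (c : ℝ) (n : ℕ) : ℝ :=
  min (D.sumTerm s c (1 / (2 * D.l s c - 1)) n) (1 / 2)

/-- `d_n(c) = min_{1 ≤ i < n} (γ_i(c)/|Df^i(f(c))|)^{1/l(c)} |f^i(c)−c̃|^{l(c̃)/l(c)}`. -/
def dSeq (s : Bool) (c : ℝ) (n : ℕ) : ℝ :=
  sInf {t | ∃ i, 1 ≤ i ∧ i < n ∧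
    t = (D.gamma s c i / |D.DfnFc s c i|) ^ (1 / D.l s c) *
      |D.fnC s c i - D.nearest (D.fnC s c i)| ^ (D.lNear (D.fnC s c i) / D.l s c)}

end CritData

/-- `μ` is an acip for `f`: an `f`-invariant Borel probability measure on `M = [0,1]`,
absolutely continuous with respect to Lebesgue measure. -/
def IsAcip (f : ℝ → ℝ) (μ : Measure ℝ) : Prop :=
  IsProbabilityMeasure μ ∧ μ ≪ volume ∧ μ unitIᶜ = 0 ∧
  ∀ A : Set ℝ, MeasurableSet A → μ (f ⁻¹' A) = μ A

/-- `μ` is ergodic for `f`: every `f`-invariant Borel set has measure `0` or `1`. -/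
def IsErgodicFor (f : ℝ → ℝ) (μ : Measure ℝ) : Prop :=
  ∀ A : Set ℝ, MeasurableSet A → f ⁻¹' A = A → μ A = 0 ∨ μ A = 1

/-- `X = ⋃_{i<n} f^i(J)` is a cycle of intervals with generating interval `J`
(a nontrivial closed interval) and period `n`: `n ≥ 1` is least with `f^n(J) ⊆ J`. -/
def IsCycleWith (f : ℝ → ℝ) (J X : Set ℝ) (n : ℕ) : Prop :=
  (∃ a b : ℝ, a < b ∧ J = Icc a b) ∧ J ⊆ unitI ∧ 1 ≤ n ∧
  f^[n] '' J ⊆ J ∧ (∀ m, 1 ≤ m → m < n → ¬ f^[m] '' J ⊆ J) ∧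
  X = ⋃ i ∈ Finset.range n, f^[i] '' J

/-- `X` is a cycle of intervals for `f`. -/
def IsCycle (f : ℝ → ℝ) (X : Set ℝ) : Prop := ∃ J n, IsCycleWith f J X n

/-- A proper cycle: the interiors of the constituent intervals are pairwise disjoint. -/
def IsProperCycleWith (f : ℝ → ℝ) (J X : Set ℝ) (n : ℕ) : Prop :=
  IsCycleWith f J X n ∧
  ∀ i ∈ Finset.range n, ∀ j ∈ Finset.range n, i ≠ j →
    interior (f^[i] '' J) ∩ interior (f^[j] '' J) = ∅

/-- A minimal cycle: a cycle containing no strictly smaller cycle. -/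
def IsMinimalCycle (f : ℝ → ℝ) (X : Set ℝ) : Prop :=
  IsCycle f X ∧ ∀ Y, IsCycle f Y → Y ⊆ X → Y = X

/-- `φ` is Hölder continuous on `X`. -/
def HolderOnSet (φ : ℝ → ℝ) (X : Set ℝ) : Prop :=
  ∃ C > 0, ∃ a : ℝ, 0 < a ∧ a ≤ 1 ∧ ∀ x ∈ X, ∀ y ∈ X, |φ x - φ y| ≤ C * |x - y| ^ a

/-!
If the interiors of two cycles meet, some constituent interval of the first and some
constituent interval of the second overlap in a nondegenerate closed interval `L`
(continuity makes every constituent interval a closed interval). Both constituent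
intervals are invariant under a common iterate of `f`, hence so is `L`, and `L` generates a
cycle lying in both cycles, since cycles are forward invariant. Minimality forces both
cycles to equal this one.
-/

theorem exists_mem_inter_interior_nonempty_of_subset_biUnion {X ι : Type*}
    [TopologicalSpace X] {C : ι → Set X} (hC : ∀ i, IsClosed (C i)) (s : Finset ι)
    {U : Set X} (hU : IsOpen U) (hne : U.Nonempty) (hsub : U ⊆ ⋃ i ∈ s, C i) :
    ∃ i ∈ s, (U ∩ interior (C i)).Nonempty := by
  classical
  induction s using Finset.induction_on generalizing U with
  | empty => simp_all [subset_empty_iff, nonempty_iff_ne_empty]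
  | insert a s _ ih =>
    by_cases hUa : U ⊆ C a
    · refine ⟨a, Finset.mem_insert_self a s, ?_⟩
      rwa [inter_eq_left.mpr (hU.subset_interior_iff.mpr hUa)]
    · have hsub' : U \ C a ⊆ ⋃ i ∈ s, C i := fun x ⟨hxU, hxa⟩ => by
        simpa [hxa] using hsub hxU
      obtain ⟨i, hi, hUi⟩ := ih (hU.sdiff (hC a)) (sdiff_nonempty.mpr hUa) hsub'
      exact ⟨i, Finset.mem_insert_of_mem hi,
        hUi.mono (inter_subset_inter_left _ sdiff_subset)⟩

namespace IsCycleWith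

variable {f : ℝ → ℝ} {J X : Set ℝ} {n : ℕ}

theorem iterate_image_subset (h : IsCycleWith f J X n) (k : ℕ) : f^[k] '' J ⊆ X := by
  obtain ⟨-, -, hn, hJ, -, rfl⟩ := h
  induction k using Nat.strong_induction_on with
  | _ k ih =>
    rcases lt_or_ge k n with hk | hk
    · exact subset_biUnion_of_mem (u := fun i => f^[i] '' J) (Finset.mem_coe.mpr
        (Finset.mem_range.mpr hk))
    · calc f^[k] '' J = f^[k - n] '' (f^[n] '' J) := by
            rw [← image_comp, ← Function.iterate_add, Nat.sub_add_cancel hk]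
        _ ⊆ f^[k - n] '' J := image_mono hJ
        _ ⊆ _ := ih _ (Nat.sub_lt (by omega) hn)

theorem mapsTo (h : IsCycleWith f J X n) : MapsTo f X X := by
  obtain ⟨-, -, -, -, -, hX⟩ := id h
  intro x hx
  rw [hX] at hx
  simp only [mem_iUnion] at hx
  obtain ⟨i, -, y, hy, rfl⟩ := hx
  exact h.iterate_image_subset (i + 1) ⟨y, hy, Function.iterate_succ_apply' f i y⟩

theorem biUnion_iterate_image_subset (h : IsCycleWith f J X n) {L : Set ℝ} (hL : L ⊆ X)
    (p : ℕ) : ⋃ k ∈ Finset.range p, f^[k] '' L ⊆ X :=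
  iUnion₂_subset fun k _ => ((h.mapsTo.iterate k).mono_left hL).image_subset

theorem subset_unitI (hmaps : MapsTo f unitI unitI) (h : IsCycleWith f J X n) :
    X ⊆ unitI := by
  obtain ⟨-, hJ, -, -, -, rfl⟩ := h
  exact iUnion₂_subset fun i _ => ((hmaps.iterate i).mono_left hJ).image_subset

theorem mapsTo_iterate_image (h : IsCycleWith f J X n) (i : ℕ) :
    MapsTo f^[n] (f^[i] '' J) (f^[i] '' J) := by
  rintro _ ⟨x, hx, rfl⟩
  exact ⟨f^[n] x, h.2.2.2.1 ⟨x, hx, rfl⟩, Function.Commute.iterate_iterate_self f i n x⟩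

theorem iterate_image_eq_Icc (hcont : ContinuousOn f unitI) (hmaps : MapsTo f unitI unitI)
    (h : IsCycleWith f J X n) (i : ℕ) : ∃ a b, f^[i] '' J = Icc a b := by
  obtain ⟨⟨a, b, hab, rfl⟩, hJ, -⟩ := h
  exact ⟨_, _, ((hcont.iterate hmaps i).mono hJ).image_Icc hab.le⟩

theorem isClosed_iterate_image (hcont : ContinuousOn f unitI) (hmaps : MapsTo f unitI unitI)
    (h : IsCycleWith f J X n) (i : ℕ) : IsClosed (f^[i] '' J) := by
  obtain ⟨a, b, hab⟩ := h.iterate_image_eq_Icc hcont hmaps i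
  exact hab ▸ isClosed_Icc

end IsCycleWith

theorem exists_isCycleWith_of_mapsTo_iterate {f : ℝ → ℝ} {a b : ℝ} (hab : a < b)
    (hL : Icc a b ⊆ unitI) {N : ℕ} (hN : 0 < N) (hinv : MapsTo f^[N] (Icc a b) (Icc a b)) :
    ∃ p, IsCycleWith f (Icc a b) (⋃ k ∈ Finset.range p, f^[k] '' Icc a b) p := by
  classical
  have hex : ∃ p, 1 ≤ p ∧ f^[p] '' Icc a b ⊆ Icc a b := ⟨N, hN, hinv.image_subset⟩
  obtain ⟨hp, hpinv⟩ := Nat.find_spec hex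
  exact ⟨Nat.find hex, ⟨a, b, hab, rfl⟩, hL, hp, hpinv,
    fun m hm hlt hminv => Nat.find_min hex hlt ⟨hm, hminv⟩, rfl⟩

namespace IsCycleWith

variable {f : ℝ → ℝ} {J K X Y : Set ℝ} {n m : ℕ}

theorem exists_interior_iterate_image_inter_nonempty (hcont : ContinuousOn f unitI)
    (hmaps : MapsTo f unitI unitI) (hX : IsCycleWith f J X n) (hY : IsCycleWith f K Y m)
    (hXY : (interior X ∩ interior Y).Nonempty) :
    ∃ i j, (interior (f^[i] '' J) ∩ interior (f^[j] '' K)).Nonempty := by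
  obtain ⟨-, -, -, -, -, hXeq⟩ := id hX
  obtain ⟨-, -, -, -, -, hYeq⟩ := id hY
  obtain ⟨i, -, hXi⟩ := exists_mem_inter_interior_nonempty_of_subset_biUnion
    (hX.isClosed_iterate_image hcont hmaps) (Finset.range n)
    (isOpen_interior.inter isOpen_interior) hXY
    (inter_subset_left.trans (interior_subset.trans hXeq.subset))
  obtain ⟨j, -, hXiYj⟩ := exists_mem_inter_interior_nonempty_of_subset_biUnion
    (hY.isClosed_iterate_image hcont hmaps) (Finset.range m)
    ((isOpen_interior.inter isOpen_interior).inter isOpen_interior) hXi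
    (inter_subset_left.trans (inter_subset_right.trans (interior_subset.trans hYeq.subset)))
  exact ⟨i, j, hXiYj.mono fun x hx => ⟨hx.1.2, hx.2⟩⟩

theorem exists_isCycle_subset_of_interior_iterate_image_inter_nonempty
    (hcont : ContinuousOn f unitI) (hmaps : MapsTo f unitI unitI)
    (hX : IsCycleWith f J X n) (hY : IsCycleWith f K Y m) {i j : ℕ}
    (hij : (interior (f^[i] '' J) ∩ interior (f^[j] '' K)).Nonempty) :
    ∃ Z, IsCycle f Z ∧ Z ⊆ X ∧ Z ⊆ Y := by
  obtain ⟨a, b, hI⟩ := hX.iterate_image_eq_Icc hcont hmaps i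
  obtain ⟨c, d, hK⟩ := hY.iterate_image_eq_Icc hcont hmaps j
  set L := Icc (max a c) (min b d)
  have hL : L = f^[i] '' J ∩ f^[j] '' K := by
    rw [hI, hK, Icc_inter_Icc]
  have hlt : max a c < min b d := by
    obtain ⟨x, hxI, hxK⟩ := hij
    rw [hI, interior_Icc] at hxI
    rw [hK, interior_Icc] at hxK
    exact max_lt (lt_min (hxI.1.trans hxI.2) (hxI.1.trans hxK.2))
      (lt_min (hxK.1.trans hxI.2) (hxK.1.trans hxK.2))
  have hinv : MapsTo f^[n * m] L L := by
    have hIinv : MapsTo f^[n * m] (f^[i] '' J) (f^[i] '' J) := by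
      rw [Function.iterate_mul]
      exact (hX.mapsTo_iterate_image i).iterate m
    have hKinv : MapsTo f^[n * m] (f^[j] '' K) (f^[j] '' K) := by
      rw [mul_comm, Function.iterate_mul]
      exact (hY.mapsTo_iterate_image j).iterate n
    exact hL ▸ hIinv.inter_inter hKinv
  have hLX : L ⊆ X := hL ▸ inter_subset_left.trans (hX.iterate_image_subset i)
  have hLY : L ⊆ Y := hL ▸ inter_subset_right.trans (hY.iterate_image_subset j)
  obtain ⟨p, hp⟩ := exists_isCycleWith_of_mapsTo_iterate hlt (hLX.trans (hX.subset_unitI hmaps))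
    (Nat.mul_pos hX.2.2.1 hY.2.2.1) hinv
  exact ⟨_, ⟨L, p, hp⟩, hX.biUnion_iterate_image_subset hLX p,
    hY.biUnion_iterate_image_subset hLY p⟩

end IsCycleWith

theorem statement15 (f : ℝ → ℝ) (hcont : ContinuousOn f unitI)
    (hmaps : MapsTo f unitI unitI)
    (X Y : Set ℝ) (hX : IsMinimalCycle f X) (hY : IsMinimalCycle f Y) :
    X = Y ∨ interior X ∩ interior Y = ∅ := by
  rcases (interior X ∩ interior Y).eq_empty_or_nonempty with hXY | hXY
  · exact Or.inr hXY
  obtain ⟨⟨J, n, hJ⟩, hXmin⟩ := hX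
  obtain ⟨⟨K, m, hK⟩, hYmin⟩ := hY
  obtain ⟨i, j, hij⟩ := hJ.exists_interior_iterate_image_inter_nonempty hcont hmaps hK hXY
  obtain ⟨Z, hZ, hZX, hZY⟩ :=
    hJ.exists_isCycle_subset_of_interior_iterate_image_inter_nonempty hcont hmaps hK hij
  exact Or.inl ((hXmin Z hZ hZX).symm.trans (hYmin Z hZ hZY))
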